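/- arXiv:gr-qc/0607134 — 2 statements merged into one kernel-verified Lean document; each statement's English description precedes it below -/
import Mathlib

section
/- Let X be a nonempty compact topological space and let r be a transitive binary relation on X such that for every q ∈ X the chronological future I⁺(q) = {p ∈ X | r q p} is an open set. If the sets I⁺(q), q ∈ X, cover X, then there exists a point q ∈ X with r q q (i.e., the chronology-violating set is non-empty). -/
/-- Abstract causal content of Proposition 6.4.2 (Hawking–Ellis): if a nonempty
compact space is covered by the (open) chronological futures `I⁺(q) = {p | r q p}`
of a transitive relation `r`, then some point chronologically precedes itself. -/
theorem compact_cover_by_futures_exists_chronology_violation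
    {X : Type*} [TopologicalSpace X] [CompactSpace X] [Nonempty X]
    (r : X → X → Prop) (htrans : Transitive r)
    (hopen : ∀ q : X, IsOpen {p : X | r q p})
    (hcover : (⋃ q : X, {p : X | r q p}) = Set.univ) :
    ∃ q : X, r q q := by
  obtain ⟨t, ht⟩ := CompactSpace.isCompact_univ.elim_finite_subcover
    (fun q : X => {p : X | r q p}) hopen (hcover ▸ subset_rfl)
  -- every element of t is preceded by some element of t
  have hstep : ∀ y : t, ∃ z : t, r (z : X) (y : X) := by
    intro ⟨y, hy⟩
    have := ht (Set.mem_univ y)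
    simp only [Set.mem_iUnion] at this
    obtain ⟨z, hz, hrz⟩ := this
    exact ⟨⟨z, hz⟩, hrz⟩
  choose g hg using hstep
  -- t is nonempty
  obtain ⟨x0⟩ := ‹Nonempty X›
  have hx0 := ht (Set.mem_univ x0)
  simp only [Set.mem_iUnion] at hx0
  obtain ⟨z0, hz0, -⟩ := hx0
  set x : t := ⟨z0, hz0⟩
  -- r (g^[k+1] y) y for all k, y
  have key : ∀ (k : ℕ) (y : t), r ((g^[k+1] y : t) : X) (y : X) := by
    intro k
    induction k with
    | zero => intro y; simpa using hg y
    | succ k ih =>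
      intro y
      have h1 : g^[k+1+1] y = g^[k+1] (g y) := by
        rw [Function.iterate_succ_apply]
      rw [h1]
      exact htrans (ih (g y)) (hg y)
  -- iterates of g on finite type t are not injective
  obtain ⟨m, n, hne, heq⟩ := Finite.exists_ne_map_eq_of_infinite (fun n : ℕ => g^[n] x)
  rcases hne.lt_or_gt with h | h
  · obtain ⟨k, rfl⟩ : ∃ k, n = m + (k + 1) := ⟨n - m - 1, by omega⟩
    refine ⟨(g^[m] x : X), ?_⟩
    have heq1 : g^[k+1] (g^[m] x) = g^[m] x := by
      rw [← Function.iterate_add_apply]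
      simpa [Nat.add_comm] using heq.symm
    have := key k (g^[m] x)
    rwa [heq1] at this
  · obtain ⟨k, rfl⟩ : ∃ k, m = n + (k + 1) := ⟨m - n - 1, by omega⟩
    refine ⟨(g^[n] x : X), ?_⟩
    have heq2 : g^[k+1] (g^[n] x) = g^[n] x := by
      rw [← Function.iterate_add_apply]
      simpa [Nat.add_comm] using heq
    have := key k (g^[n] x)
    rwa [heq2] at this
end

section
/- Let r be a transitive binary relation on a topological space X such that for every q ∈ X the sets I⁺(q) = {p ∈ X | r q p} and I⁻(q) = {p ∈ X | r p q} are open. Let F ⊆ X be a future set, i.e., for every s ∈ F and p ∈ X with r s p one has p ∈ F. Then the topological boundary ∂F of F is achronal: there are no two points p, q ∈ ∂F with r p q. -/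
/-- Achronality content of Proposition 6.3.1 (Hawking–Ellis): the topological
boundary of a future set `F` (a set closed under passing to chronological
futures) is achronal, provided all chronological futures and pasts are open. -/
theorem boundary_of_future_set_is_achronal
    {X : Type*} [TopologicalSpace X] (r : X → X → Prop) (htrans : Transitive r)
    (hopenFut : ∀ q : X, IsOpen {p : X | r q p})
    (hopenPast : ∀ q : X, IsOpen {p : X | r p q})
    (F : Set X) (hF : ∀ s ∈ F, ∀ p : X, r s p → p ∈ F) :
    ∀ p ∈ frontier F, ∀ q ∈ frontier F, ¬ r p q := by
  intro p hp q hq hrpq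
  -- `I⁻(q)` is an open neighborhood of `p`, and `p ∈ closure F`,
  -- so there is `s ∈ F` with `r s q`.
  have hpcl : p ∈ closure F := hp.1
  have hmem : ∃ s, s ∈ F ∧ r s q := by
    have := mem_closure_iff.mp hpcl {p' | r p' q} (hopenPast q) hrpq
    obtain ⟨s, hs1, hs2⟩ := this
    exact ⟨s, hs2, hs1⟩
  obtain ⟨s, hsF, hsq⟩ := hmem
  -- `I⁺(s)` is an open set containing `q` and contained in `F`.
  have hqint : q ∈ interior F :=
    mem_interior.mpr ⟨{x | r s x}, fun x hx => hF s hsF x hx, hopenFut s, hsq⟩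
  exact hq.2 hqint
end
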